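/- Let K be a field, n ≥ 2, and suppose u₁,…,u_{n-1} form a basis of V₂ = span(e₂,…,eₙ) ⊆ Kⁿ, with scalars t₁,…,t_{n-1} ∈ K. Let ψ : V₂ → K be the linear functional with ψ(uᵢ) = tᵢ. For x ∈ K× and q ∈ K with x^{-(n-1)} - x = q·s (for a fixed s ∈ K×), define S_x(t e₁ + u) = (x^{-(n-1)} t - q s ψ(u)) e₁ + x u. Then S_x ∈ SL_n(K), S_x fixes the line K·e₁, and S_x fixes each line K·(uᵢ + tᵢ e₁). -/

import Mathlib

/-! `S_x` is the matrix `x • 1` with the row of `e₁` replaced by the coefficients of the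
functional `ℓ = x^{-(n-1)} e₁* - q s ψ`. Expanding along that row gives
`det S_x = ℓ(e₁) x^{n-1} = 1`, and on `uᵢ + tᵢ e₁` the `e₁`-coordinate becomes
`(x^{-(n-1)} - q s) tᵢ = x tᵢ`. -/

namespace Matrix

variable {ι R : Type*} [Fintype ι] [DecidableEq ι] [CommRing R]

theorem det_updateRow_one (z : ι) (w : ι → R) :
    (updateRow (1 : Matrix ι ι R) z w).det = w z := by
  have hw : ∑ k, w k • (1 : Matrix ι ι R) k = w := by
    ext i
    simp [Finset.sum_apply, one_apply]
  simpa [hw] using det_updateRow_sum (1 : Matrix ι ι R) z w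

theorem det_updateRow_smul_one (x : R) (z : ι) (w : ι → R) :
    (updateRow (x • (1 : Matrix ι ι R)) z w).det = x ^ (Fintype.card ι - 1) * w z := by
  rw [det_updateRow_smul_left, det_updateRow_one]

theorem updateRow_smul_one_mulVec_single_add (x c : R) (z : ι) (w : ι → R) {v : ι → R}
    (hv : v z = 0) :
    updateRow (x • (1 : Matrix ι ι R)) z w *ᵥ (c • Pi.single z 1 + v) =
      (w ⬝ᵥ (c • Pi.single z 1 + v)) • Pi.single z 1 + x • v := by
  rw [updateRow_mulVec, smul_mulVec, one_mulVec]
  ext i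
  rcases eq_or_ne i z with rfl | hi
  · simp [hv]
  · simp [hi]

end Matrix

theorem LinearMap.apply_eq_dotProduct {ι R : Type*} [Fintype ι] [DecidableEq ι] [CommRing R]
    (ℓ : (ι → R) →ₗ[R] R) (v : ι → R) :
    ℓ v = (fun j => ℓ (Pi.single j 1)) ⬝ᵥ v := by
  conv_lhs => rw [pi_eq_sum_univ' v]
  simp [dotProduct, mul_comm]

theorem LinearMap.map_span_singleton_of_apply_eq_smul {R M : Type*} [CommRing R]
    [AddCommGroup M] [Module R M] (f : M →ₗ[R] M) {μ : R} (hμ : IsUnit μ) {w : M}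
    (hw : f w = μ • w) : (Submodule.span R {w}).map f = Submodule.span R {w} := by
  rw [Submodule.map_span, Set.image_singleton, hw, Submodule.span_singleton_smul_eq hμ]

/-- Let `K` be a field, `n ≥ 2`, and `u₁, …, u_{n-1}` a basis of
`V₂ = span(e₂,…,eₙ) ⊆ Kⁿ`, with scalars `tᵢ ∈ K`. Let `ψ` be the linear functional on
`V₂` (extended to `Kⁿ` by `ψ(e₁) = 0`) with `ψ(uᵢ) = tᵢ`. For `x ∈ K×` and `q ∈ K` with
`x^{-(n-1)} - x = q·s` (for a fixed `s ∈ K×`), the map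
`S_x(t e₁ + u) = (x^{-(n-1)} t - q s ψ(u)) e₁ + x u` is an element of `SL_n(K)` fixing
the line `K·e₁` and each line `K·(uᵢ + tᵢ e₁)`. -/
theorem stmt_17 (K : Type*) [Field K] (n : ℕ) (hn : 2 ≤ n)
    (u : Fin (n - 1) → (Fin n → K)) (hu : ∀ i, u i ⟨0, by omega⟩ = 0)
    (t : Fin (n - 1) → K)
    (ψ : (Fin n → K) →ₗ[K] K)
    (hψe : ψ (Pi.single (⟨0, by omega⟩ : Fin n) 1) = 0)
    (hψu : ∀ i, ψ (u i) = t i)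
    (x : Kˣ) (q s : K)
    (hq : ((x⁻¹ : Kˣ) : K) ^ (n - 1) - (x : K) = q * s) :
    ∃ g : Matrix.SpecialLinearGroup (Fin n) K,
      (∀ (c : K) (v : Fin n → K), v ⟨0, by omega⟩ = 0 →
        (g : Matrix (Fin n) (Fin n) K).mulVec
            (c • (Pi.single (⟨0, by omega⟩ : Fin n) 1 : Fin n → K) + v)
          = (((x⁻¹ : Kˣ) : K) ^ (n - 1) * c - q * s * ψ v) •
              (Pi.single (⟨0, by omega⟩ : Fin n) 1 : Fin n → K) + (x : K) • v) ∧
      Submodule.map (Matrix.mulVecLin (g : Matrix (Fin n) (Fin n) K))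
          (Submodule.span K {(Pi.single (⟨0, by omega⟩ : Fin n) 1 : Fin n → K)})
        = Submodule.span K {(Pi.single (⟨0, by omega⟩ : Fin n) 1 : Fin n → K)} ∧
      ∀ i : Fin (n - 1),
        Submodule.map (Matrix.mulVecLin (g : Matrix (Fin n) (Fin n) K))
            (Submodule.span K
              {u i + t i • (Pi.single (⟨0, by omega⟩ : Fin n) 1 : Fin n → K)})
          = Submodule.span K
              {u i + t i • (Pi.single (⟨0, by omega⟩ : Fin n) 1 : Fin n → K)} := by
  set z : Fin n := ⟨0, by omega⟩
  set a : K := ((x⁻¹ : Kˣ) : K) ^ (n - 1)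
  let ℓ : (Fin n → K) →ₗ[K] K := a • LinearMap.proj z - (q * s) • ψ
  let M : Matrix (Fin n) (Fin n) K :=
    Matrix.updateRow ((x : K) • 1) z fun j => ℓ (Pi.single j 1)
  have hdet : M.det = 1 := by
    rw [Matrix.det_updateRow_smul_one]
    simp [ℓ, a, hψe]
  have hM : ∀ (c : K) (v : Fin n → K), v z = 0 →
      M.mulVec (c • Pi.single z 1 + v) =
        (a * c - q * s * ψ v) • Pi.single z 1 + (x : K) • v := by
    intro c v hv
    rw [Matrix.updateRow_smul_one_mulVec_single_add _ _ _ _ hv, ← LinearMap.apply_eq_dotProduct]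
    simp [ℓ, hv, hψe]
  refine ⟨⟨M, hdet⟩, hM, ?_, fun i => ?_⟩
  · refine LinearMap.map_span_singleton_of_apply_eq_smul _ (μ := a) ((x⁻¹).isUnit.pow _) ?_
    simpa using hM 1 0 rfl
  · refine LinearMap.map_span_singleton_of_apply_eq_smul _ x.isUnit ?_
    rw [Matrix.mulVecLin_apply, add_comm, hM _ _ (hu i), hψu, ← sub_mul,
      show a - q * s = x by rw [← hq]; ring, smul_add, smul_smul, add_comm]
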